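/- arXiv:0811.1254 — 3 statements merged into one kernel-verified Lean document; each statement's English description precedes it below -/
import Mathlib

section
/- Fisher's Inequality: if (X, B) is a 2-(v,k,λ) design with 2 ≤ k < v (non-trivial), then the number of blocks b satisfies b ≥ v. -/
/-!
Counting the pairs `(y, b)` with `x ≠ y` and `x, y ∈ b` shows that every point `x` lies in
`r` blocks with `r (k - 1) = λ (v - 1)`, so `r > λ`. Hence the Gram matrix `N Nᵀ` of the
point-block incidence matrix `N` is `diag (r - λ) + λ J`, which is positive definite and so
has rank `v`; since `N` has `b` columns, `v ≤ b`.
-/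

open Finset Matrix

section Design

variable {X : Type*} [Fintype X] [DecidableEq X] {B : Finset (Finset X)} {k lam : ℕ}

theorem card_filter_mem_mul_sub_one_eq (hk : ∀ b ∈ B, #b = k)
    (h2 : ∀ x y : X, x ≠ y → #{b ∈ B | x ∈ b ∧ y ∈ b} = lam) (x : X) :
    #{b ∈ B | x ∈ b} * (k - 1) = (Fintype.card X - 1) * lam := by
  rw [← card_univ, ← card_erase_of_mem (mem_univ x)]
  refine card_mul_eq_card_mul (fun b y => y ∈ b) (fun b hb => ?_) (fun y hy => ?_)
  · obtain ⟨hbB, hxb⟩ := mem_filter.1 hb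
    rw [bipartiteAbove, ← hk b hbB, ← card_erase_of_mem hxb]
    congr 1
    ext y
    simp [and_comm]
  · rw [bipartiteBelow, filter_filter, h2 x y (ne_of_mem_erase hy).symm]

theorem lt_card_filter_mem (hk : ∀ b ∈ B, #b = k)
    (h2 : ∀ x y : X, x ≠ y → #{b ∈ B | x ∈ b ∧ y ∈ b} = lam)
    (hlam : 0 < lam) (hk0 : 0 < k) (hkv : k < Fintype.card X) (x : X) :
    lam < #{b ∈ B | x ∈ b} := by
  refine Nat.lt_of_mul_lt_mul_right (a := k - 1) ?_
  rw [card_filter_mem_mul_sub_one_eq hk h2 x, mul_comm]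
  exact Nat.mul_lt_mul_of_pos_right (by omega) hlam

end Design

section IncidenceMatrix

variable {X : Type*} [DecidableEq X]

def incidenceMatrix (R : Type*) [Zero R] [One R] (B : Finset (Finset X)) : Matrix X B R :=
  of fun x b => if x ∈ (b : Finset X) then 1 else 0

theorem incidenceMatrix_mul_transpose_apply {R : Type*} [NonAssocSemiring R]
    (B : Finset (Finset X)) (x y : X) :
    (incidenceMatrix R B * (incidenceMatrix R B)ᵀ) x y = #{b ∈ B | x ∈ b ∧ y ∈ b} := by
  simp only [incidenceMatrix, mul_apply, transpose_apply, of_apply, mul_ite, mul_one, mul_zero]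
  rw [card_filter, Nat.cast_sum, ← sum_coe_sort B]
  refine sum_congr rfl fun b _ => ?_
  split_ifs <;> simp_all

theorem incidenceMatrix_mul_transpose_eq {R : Type*} [Ring R] {B : Finset (Finset X)} {lam : ℕ}
    (h2 : ∀ x y : X, x ≠ y → #{b ∈ B | x ∈ b ∧ y ∈ b} = lam) :
    incidenceMatrix R B * (incidenceMatrix R B)ᵀ =
      diagonal (fun x => (#{b ∈ B | x ∈ b} : R) - lam) + of fun _ _ => (lam : R) := by
  ext x y
  rw [incidenceMatrix_mul_transpose_apply, Matrix.add_apply, of_apply]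
  by_cases hxy : x = y
  · subst hxy
    simp
  · rw [diagonal_apply_ne _ hxy, h2 x y hxy, zero_add]

end IncidenceMatrix

theorem posDef_diagonal_add_const {n R : Type*} [Fintype n] [DecidableEq n] [CommRing R]
    [PartialOrder R] [IsOrderedRing R] [StarRing R] [StarOrderedRing R] [NoZeroDivisors R]
    {d : n → R} (hd : ∀ i, 0 < d i) {c : R} (hc : 0 ≤ c) :
    (diagonal d + of fun _ _ => c).PosDef := by
  have hconst : (of fun _ _ => c : Matrix n n R) = c • vecMulVec 1 (star 1) := by
    ext
    simp [vecMulVec]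
  rw [hconst]
  exact (PosDef.diagonal hd).add_posSemidef ((posSemidef_vecMulVec_self_star 1).smul hc)

theorem card_le_card_of_isUnit_mul_transpose {m n K : Type*} [Fintype m] [Fintype n]
    [DecidableEq m] [Field K] (M : Matrix m n K) (h : IsUnit (M * Mᵀ)) :
    Fintype.card m ≤ Fintype.card n :=
  calc Fintype.card m = (M * Mᵀ).rank := (rank_of_isUnit _ h).symm
    _ ≤ M.rank := rank_mul_le_left M Mᵀ
    _ ≤ Fintype.card n := rank_le_card_width M

/-- Fisher's inequality: a non-trivial 2-(v,k,λ) design has at least as many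
blocks as points. -/
theorem fisher_inequality {X : Type*} [Fintype X] [DecidableEq X]
    (v k lam : ℕ) (B : Finset (Finset X))
    (hv : Fintype.card X = v) (hk : ∀ b ∈ B, b.card = k)
    (h2 : ∀ x y : X, x ≠ y → (B.filter fun b => x ∈ b ∧ y ∈ b).card = lam)
    (hlam : 0 < lam) (hk2 : 2 ≤ k) (hkv : k < v) :
    v ≤ B.card := by
  subst hv
  have hpd : (incidenceMatrix ℚ B * (incidenceMatrix ℚ B)ᵀ).PosDef := by
    rw [incidenceMatrix_mul_transpose_eq h2]
    refine posDef_diagonal_add_const (fun x => ?_) (Nat.cast_nonneg lam)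
    exact sub_pos.2 (mod_cast lt_card_filter_mem hk h2 hlam (by omega) hkv x)
  simpa using card_le_card_of_isUnit_mul_transpose _ hpd.isUnit
end

section
/- Any binary code with 4096 codewords, of length 24, containing the zero vector, and with minimum distance 8, only has codewords of weights 0, 8, 12, 16, 24, is self-orthogonal, self-dual, and in particular is a linear subspace of F_2^24. -/
/-!
Puncturing the code at a coordinate gives `2 ^ 12` words of length `23` at mutual distance at
least `7`; they meet the sphere-packing bound, so every word of length `23` is within distance `3`
of one of them. Consequently the codewords of weight `8` (octads) form a Steiner system
`S(5, 8, 24)`, and the number `λ_j` of octads through a `j`-set is determined for `j ≤ 5`.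

For a codeword `Y` of weight `w`, let `n_k` be the number of octads `B` with `#(B ∩ Y) = k`.
Double counting gives `∑ k, n_k * k.choose j = w.choose j * λ_j` for `j ≤ 5`, and `B + Y`, of
weight `8 + w - 2k`, is a codeword of the translate `C + Y`, which satisfies the same hypotheses
as `C`. Running through the weights in a suitable order, these linear equations leave no
nonnegative solution unless `w ∈ {0, 8, 12, 16, 24}`. Then all weights and all distances are
divisible by `4`, so any two codewords meet in an even number of coordinates: `C` is
self-orthogonal, and having `2 ^ 12 = 2 ^ (24 / 2)` elements it equals its dual.
-/

open Finset
open scoped symmDiff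

namespace Finset

variable {α : Type*} [DecidableEq α]

theorem card_symmDiff_add_two_mul_card_inter (s t : Finset α) :
    #(s ∆ t) + 2 * #(s ∩ t) = #s + #t := by
  rw [symmDiff_def, sup_eq_union, card_union_of_disjoint disjoint_sdiff_sdiff]
  have hs := card_sdiff_add_card_inter s t
  have ht := card_sdiff_add_card_inter t s
  rw [inter_comm] at ht
  omega

theorem card_symmDiff_le_card_erase_symmDiff_erase_add_one (s t : Finset α) (a : α) :
    #(s ∆ t) ≤ #(s.erase a ∆ t.erase a) + 1 := by
  refine (card_le_card fun x hx => ?_).trans (card_insert_le a _)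
  by_cases hxa : x = a
  · exact hxa ▸ mem_insert_self _ _
  · simp_all [mem_symmDiff]

theorem card_symmDiff_le_add (s t u : Finset α) : #(s ∆ u) ≤ #(s ∆ t) + #(t ∆ u) :=
  (card_le_card (symmDiff_triangle s t u)).trans (card_union_le _ _)

def hammingBall (s : Finset α) (r : ℕ) (t : Finset α) : Finset (Finset α) :=
  {u ∈ s.powerset | #(u ∆ t) ≤ r}

theorem card_filter_powerset_card_le (s : Finset α) (r : ℕ) :
    #{u ∈ s.powerset | #u ≤ r} = ∑ j ∈ range (r + 1), (#s).choose j := by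
  have : {u ∈ s.powerset | #u ≤ r} = (range (r + 1)).biUnion (powersetCard · s) := by
    ext u
    simp only [mem_filter, mem_powerset, mem_biUnion, mem_range, mem_powersetCard]
    exact ⟨fun h => ⟨#u, by omega, h.1, rfl⟩, fun ⟨j, hj, hu, huj⟩ => ⟨hu, by omega⟩⟩
  rw [this, card_biUnion fun i _ j _ h => pairwise_disjoint_powersetCard s h]
  simp only [card_powersetCard]

theorem card_hammingBall {s t : Finset α} (ht : t ⊆ s) (r : ℕ) :
    #(hammingBall s r t) = ∑ j ∈ range (r + 1), (#s).choose j := by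
  rw [← card_filter_powerset_card_le]
  refine card_nbij' (· ∆ t) (· ∆ t) ?_ ?_ (fun u _ => symmDiff_symmDiff_cancel_right t u)
    (fun u _ => symmDiff_symmDiff_cancel_right t u)
  · intro u hu
    simp only [hammingBall, coe_filter, mem_powerset, Set.mem_ofPred_eq] at hu ⊢
    exact ⟨symmDiff_le_sup.trans (sup_le hu.1 ht), hu.2⟩
  · intro u hu
    simp only [hammingBall, coe_filter, mem_powerset, Set.mem_ofPred_eq] at hu ⊢
    rw [symmDiff_symmDiff_cancel_right]
    exact ⟨symmDiff_le_sup.trans (sup_le hu.1 ht), hu.2⟩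

/-- A family meeting the sphere-packing bound is a perfect code. -/
theorem exists_card_symmDiff_le_of_card_mul_sum_choose_eq {s : Finset α}
    {𝒜 : Finset (Finset α)} {r : ℕ} (hsub : ∀ P ∈ 𝒜, P ⊆ s)
    (hdist : ∀ P ∈ 𝒜, ∀ Q ∈ 𝒜, P ≠ Q → 2 * r < #(P ∆ Q))
    (hcard : #𝒜 * ∑ j ∈ range (r + 1), (#s).choose j = 2 ^ #s) {w : Finset α} (hw : w ⊆ s) :
    ∃ P ∈ 𝒜, #(w ∆ P) ≤ r := by
  have hdisj : (𝒜 : Set (Finset α)).PairwiseDisjoint (hammingBall s r) := by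
    refine fun P hP Q hQ hPQ => disjoint_left.mpr fun u huP huQ => ?_
    simp only [hammingBall, mem_filter] at huP huQ
    have := card_symmDiff_le_add P u Q
    rw [symmDiff_comm P u] at this
    have := hdist P hP Q hQ hPQ
    omega
  have hcover : 𝒜.biUnion (hammingBall s r) = s.powerset := by
    refine eq_of_subset_of_card_le (fun u hu => ?_) ?_
    · obtain ⟨P, -, hu⟩ := mem_biUnion.mp hu
      exact (mem_filter.mp hu).1
    · rw [card_powerset, card_biUnion hdisj, ← hcard,
        sum_congr rfl fun P hP => card_hammingBall (hsub P hP) r, sum_const, smul_eq_mul]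
  obtain ⟨P, hP, hwP⟩ := mem_biUnion.mp (hcover ▸ mem_powerset.mpr hw)
  exact ⟨P, hP, (mem_filter.mp hwP).2⟩

theorem card_filter_superset_mul_eq [Fintype α] {𝒜 : Finset (Finset α)} {k j m : ℕ}
    (hk : ∀ B ∈ 𝒜, #B = k) (hm : ∀ T : Finset α, #T = j + 1 → #{B ∈ 𝒜 | T ⊆ B} = m)
    {T : Finset α} (hT : #T = j) :
    #{B ∈ 𝒜 | T ⊆ B} * (k - j) = (Fintype.card α - j) * m := by
  rw [← hT, ← card_compl]
  refine card_mul_eq_card_mul (fun B p => p ∈ B) (fun B hB => ?_) (fun p hp => ?_)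
  · obtain ⟨hB, hTB⟩ := mem_filter.mp hB
    rw [← hk B hB, ← card_sdiff_of_subset hTB]
    congr 1
    ext p
    simp [bipartiteAbove, and_comm]
  · rw [← hm (insert p T) (by rw [card_insert_of_notMem (mem_compl.mp hp), hT])]
    congr 1
    ext B
    simp only [bipartiteBelow, mem_filter, insert_subset_iff]
    tauto

theorem sum_choose_card_inter {𝒜 : Finset (Finset α)} {j m : ℕ}
    (hm : ∀ T : Finset α, #T = j → #{B ∈ 𝒜 | T ⊆ B} = m) (Y : Finset α) :
    ∑ B ∈ 𝒜, (#(B ∩ Y)).choose j = (#Y).choose j * m := by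
  let r : Finset α → Finset α → Prop := fun B T => T ⊆ B
  calc ∑ B ∈ 𝒜, (#(B ∩ Y)).choose j
      = ∑ B ∈ 𝒜, #((Y.powersetCard j).bipartiteAbove r B) := by
        refine sum_congr rfl fun B _ => ?_
        rw [← card_powersetCard]
        congr 1
        ext T
        simp only [r, bipartiteAbove, mem_filter, mem_powersetCard, subset_inter_iff]
        tauto
    _ = ∑ T ∈ Y.powersetCard j, #(𝒜.bipartiteBelow r T) :=
        sum_card_bipartiteAbove_eq_sum_card_bipartiteBelow r
    _ = (#Y).choose j * m := by
        rw [sum_const_nat fun T hT => by exact hm T (mem_powersetCard.mp hT).2, card_powersetCard]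

end Finset

section BinaryWords

variable {ι : Type*} [Fintype ι]

def wordSupport (x : ι → ZMod 2) : Finset ι := {i | x i ≠ 0}

theorem wordSupport_add [DecidableEq ι] (x y : ι → ZMod 2) :
    wordSupport (x + y) = wordSupport x ∆ wordSupport y := by
  ext i
  simp only [wordSupport, mem_symmDiff, mem_filter, mem_univ, true_and, Pi.add_apply]
  generalize x i = a
  generalize y i = b
  revert a b
  decide

theorem wordSupport_injective : Function.Injective (wordSupport (ι := ι)) := by
  intro x y h
  funext i
  have := congrArg (i ∈ ·) h
  simp only [wordSupport, mem_filter, mem_univ, true_and, eq_iff_iff] at this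
  revert this
  generalize x i = a
  generalize y i = b
  revert a b
  decide

theorem wordSupport_zero : wordSupport (0 : ι → ZMod 2) = ∅ := by
  simp [wordSupport]

theorem hammingDist_eq_card_symmDiff [DecidableEq ι] (x y : ι → ZMod 2) :
    hammingDist x y = #(wordSupport x ∆ wordSupport y) := by
  rw [hammingDist_eq_hammingNorm, ZModModule.neg_eq_self, ← wordSupport_add]
  rfl

theorem dotProduct_eq_card_inter [DecidableEq ι] (x y : ι → ZMod 2) :
    x ⬝ᵥ y = #(wordSupport x ∩ wordSupport y) := by
  have hmul : ∀ a b : ZMod 2, a * b = if a ≠ 0 ∧ b ≠ 0 then 1 else 0 := by decide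
  simp only [dotProduct, hmul, sum_boole, wordSupport, filter_and]

end BinaryWords

section SelfDual

variable {K ι : Type*} [Field K] [Fintype ι] [DecidableEq ι]

theorem mem_orthogonal_span_iff {C : Set (ι → K)} {x : ι → K} :
    x ∈ (Matrix.toBilin' (1 : Matrix ι ι K)).orthogonal (Submodule.span K C) ↔
      ∀ y ∈ C, x ⬝ᵥ y = 0 := by
  simp only [LinearMap.BilinForm.mem_orthogonal_iff, Matrix.toBilin'_apply', Matrix.one_mulVec]
  refine ⟨fun h y hy => (dotProduct_comm _ _).trans (h y (Submodule.subset_span hy)),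
    fun h y hy => ?_⟩
  induction hy using Submodule.span_induction with
  | mem z hz => rw [dotProduct_comm]; exact h z hz
  | zero => exact zero_dotProduct x
  | add a b _ _ ha hb => rw [add_dotProduct, ha, hb, add_zero]
  | smul c a _ ha => rw [smul_dotProduct, ha, smul_zero]

theorem eq_orthogonal_span_of_card_sq_eq [Fintype K] {C : Set (ι → K)}
    (horth : ∀ x ∈ C, ∀ y ∈ C, x ⬝ᵥ y = 0)
    (hcard : Nat.card C ^ 2 = Fintype.card K ^ Fintype.card ι) :
    C = (Matrix.toBilin' (1 : Matrix ι ι K)).orthogonal (Submodule.span K C) := by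
  set D := (Matrix.toBilin' (1 : Matrix ι ι K)).orthogonal (Submodule.span K C)
  have hq : 1 < Fintype.card K := Fintype.one_lt_card
  have hspan : Nat.card C ≤ Fintype.card K ^ Module.finrank K (Submodule.span K C) := by
    rw [← Nat.card_eq_fintype_card, ← Module.natCard_eq_pow_finrank]
    exact Nat.card_mono (Set.toFinite _) Submodule.subset_span
  have hD :
      Nat.card D = Fintype.card K ^ (Fintype.card ι - Module.finrank K (Submodule.span K C)) := by
    rw [← Nat.card_eq_fintype_card, Module.natCard_eq_pow_finrank (K := K),
      LinearMap.BilinForm.finrank_orthogonal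
        (LinearMap.BilinForm.nondegenerate_toBilin'_of_det_ne_zero' 1 (by simp)),
      Module.finrank_fintype_fun_eq_card]
  have hrank : Fintype.card ι ≤ 2 * Module.finrank K (Submodule.span K C) := by
    rw [← Nat.pow_le_pow_iff_right hq, pow_mul', ← hcard]
    exact Nat.pow_le_pow_left hspan 2
  have hle : Nat.card D ≤ Nat.card C := by
    rw [← Nat.pow_le_pow_iff_left two_ne_zero, hcard, hD, ← pow_mul]
    exact Nat.pow_le_pow_right (by omega) (by omega)
  refine Set.eq_of_subset_of_ncard_le (fun x hx => mem_orthogonal_span_iff.mpr (horth x hx)) ?_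
    (Set.toFinite _)
  rwa [← Nat.card_coe_set_eq, ← Nat.card_coe_set_eq]

end SelfDual

/-- The supports of the codewords of a code as in the theorem; adding words is taking `∆`. -/
structure IsGolayLike (𝒞 : Finset (Finset (Fin 24))) : Prop where
  card_eq : #𝒞 = 4096
  empty_mem : ∅ ∈ 𝒞
  le_card_symmDiff : ∀ A ∈ 𝒞, ∀ B ∈ 𝒞, A ≠ B → 8 ≤ #(A ∆ B)

def octads (𝒞 : Finset (Finset (Fin 24))) : Finset (Finset (Fin 24)) := {B ∈ 𝒞 | #B = 8}

theorem mem_octads {𝒞 : Finset (Finset (Fin 24))} {B : Finset (Fin 24)} :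
    B ∈ octads 𝒞 ↔ B ∈ 𝒞 ∧ #B = 8 :=
  mem_filter

/-- The number of blocks through a `j`-set in a Steiner system `S(5, 8, 24)`. -/
def octadCount (j : ℕ) : ℕ := (24 - j).choose (5 - j) / (8 - j).choose (5 - j)

theorem octadCount_mul_eq : ∀ j < 5, octadCount j * (8 - j) = (24 - j) * octadCount (j + 1) := by
  decide

def IsGolayWeight (w : ℕ) : Prop := ∃ 𝒞, IsGolayLike 𝒞 ∧ ∃ A ∈ 𝒞, #A = w

def intersectionNumber (𝒞 : Finset (Finset (Fin 24))) (Y : Finset (Fin 24)) (k : ℕ) : ℕ :=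
  #{B ∈ octads 𝒞 | #(B ∩ Y) = k}

namespace IsGolayLike

variable {𝒞 : Finset (Finset (Fin 24))} (h𝒞 : IsGolayLike 𝒞)
include h𝒞

theorem le_card {A : Finset (Fin 24)} (hA : A ∈ 𝒞) (hA₀ : A ≠ ∅) : 8 ≤ #A := by
  have := h𝒞.le_card_symmDiff A hA ∅ h𝒞.empty_mem hA₀
  rwa [← bot_eq_empty, symmDiff_bot] at this

theorem image_symmDiff {Y : Finset (Fin 24)} (hY : Y ∈ 𝒞) : IsGolayLike (𝒞.image (· ∆ Y)) where
  card_eq := by rw [card_image_of_injective _ (symmDiff_left_injective Y), h𝒞.card_eq]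
  empty_mem := mem_image.mpr ⟨Y, hY, symmDiff_self Y⟩
  le_card_symmDiff := by
    simp only [mem_image, forall_exists_index, and_imp, forall_apply_eq_imp_iff₂]
    intro A hA B hB hAB
    rw [symmDiff_symmDiff_symmDiff_comm, symmDiff_self, symmDiff_bot]
    exact h𝒞.le_card_symmDiff A hA B hB (ne_of_apply_ne (· ∆ Y) hAB)

/-- Puncturing at `i` gives a perfect `3`-error-correcting code of length `23`. -/
theorem exists_card_symmDiff_erase_le (i : Fin 24) {w : Finset (Fin 24)} (hw : i ∉ w) :
    ∃ A ∈ 𝒞, #(w ∆ A.erase i) ≤ 3 := by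
  have hdist : ∀ A ∈ 𝒞, ∀ B ∈ 𝒞, A ≠ B → 6 < #(A.erase i ∆ B.erase i) := by
    intro A hA B hB hAB
    have := card_symmDiff_le_card_erase_symmDiff_erase_add_one A B i
    have := h𝒞.le_card_symmDiff A hA B hB hAB
    omega
  have hinj : Set.InjOn (fun A : Finset (Fin 24) => A.erase i) 𝒞 := fun A hA B hB hAB => by
    by_contra hne
    have := hdist A hA B hB hne
    simp_all
  obtain ⟨P, hP, hwP⟩ := exists_card_symmDiff_le_of_card_mul_sum_choose_eq (r := 3)
    (s := univ.erase i) (𝒜 := 𝒞.image fun A => A.erase i)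
    (by simp only [mem_image]; rintro _ ⟨A, -, rfl⟩; exact erase_subset_erase i (subset_univ A))
    (by simp only [mem_image]; rintro _ ⟨A, hA, rfl⟩ _ ⟨B, hB, rfl⟩ hAB
        exact hdist A hA B hB fun h => hAB (h ▸ rfl))
    (by rw [card_image_of_injOn hinj, h𝒞.card_eq, card_erase_of_mem (mem_univ i)]; decide)
    (by simpa [subset_erase] using hw)
  obtain ⟨A, hA, rfl⟩ := mem_image.mp hP
  exact ⟨A, hA, hwP⟩

theorem exists_octad_superset {S : Finset (Fin 24)} (hS : #S = 5) :
    ∃ B ∈ octads 𝒞, S ⊆ B := by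
  obtain ⟨i, hi⟩ := card_pos.mp (by omega : 0 < #S)
  have hv : #(S.erase i) = 4 := by rw [card_erase_of_mem hi, hS]
  obtain ⟨A, hA, hvA⟩ := h𝒞.exists_card_symmDiff_erase_le i (notMem_erase i S)
  have hA₀ : A ≠ ∅ := by
    rintro rfl
    rw [erase_empty, ← bot_eq_empty, symmDiff_bot] at hvA
    omega
  have h8 := h𝒞.le_card hA hA₀
  have hAi := pred_card_le_card_erase (s := A) (a := i)
  have hsymm := card_symmDiff_add_two_mul_card_inter (S.erase i) (A.erase i)
  have hinter := card_le_card (inter_subset_left : S.erase i ∩ A.erase i ⊆ S.erase i)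
  have h7 : #(A.erase i) = 7 := by omega
  have hvsub : S.erase i ⊆ A.erase i :=
    inter_eq_left.mp (eq_of_subset_of_card_le inter_subset_left (by omega))
  have hiA : i ∈ A := by
    by_contra hiA
    rw [erase_eq_of_notMem hiA] at h7
    omega
  refine ⟨A, mem_octads.mpr ⟨hA, ?_⟩, ?_⟩
  · rw [card_erase_of_mem hiA] at h7
    omega
  · rw [← insert_erase hi]
    exact insert_subset hiA (hvsub.trans (erase_subset i A))

theorem octad_eq_of_subset_of_subset {B B' S : Finset (Fin 24)} (hB : B ∈ octads 𝒞)
    (hB' : B' ∈ octads 𝒞) (hS : #S = 5) (hSB : S ⊆ B) (hSB' : S ⊆ B') : B = B' := by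
  obtain ⟨hB, hB8⟩ := mem_octads.mp hB
  obtain ⟨hB', hB'8⟩ := mem_octads.mp hB'
  by_contra hne
  have := h𝒞.le_card_symmDiff B hB B' hB' hne
  have := card_symmDiff_add_two_mul_card_inter B B'
  have := card_le_card (subset_inter hSB hSB')
  omega

theorem card_filter_octads_superset_of_card_eq_five {S : Finset (Fin 24)} (hS : #S = 5) :
    #{B ∈ octads 𝒞 | S ⊆ B} = 1 := by
  obtain ⟨B, hB, hSB⟩ := h𝒞.exists_octad_superset hS
  refine card_eq_one.mpr ⟨B, eq_singleton_iff_unique_mem.mpr ⟨mem_filter.mpr ⟨hB, hSB⟩, ?_⟩⟩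
  intro B' hB'
  obtain ⟨hB', hSB'⟩ := mem_filter.mp hB'
  exact h𝒞.octad_eq_of_subset_of_subset hB' hB hS hSB' hSB

theorem card_filter_octads_superset {T : Finset (Fin 24)} (hT : #T ≤ 5) :
    #{B ∈ octads 𝒞 | T ⊆ B} = octadCount #T := by
  obtain ⟨d, hd⟩ : ∃ d, #T + d = 5 := ⟨5 - #T, by omega⟩
  induction d generalizing T with
  | zero =>
    rw [h𝒞.card_filter_octads_superset_of_card_eq_five hd, show #T = 5 by omega]
    rfl
  | succ d ih =>
    have hstep := card_filter_superset_mul_eq (fun B hB => (mem_octads.mp hB).2)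
      (fun T' hT' => hT' ▸ ih (by omega) (by omega)) (rfl : #T = #T)
    rw [Fintype.card_fin] at hstep
    exact Nat.eq_of_mul_eq_mul_right (by omega)
      (hstep.trans (octadCount_mul_eq #T (by omega)).symm)

theorem isGolayWeight_card_symmDiff {A B : Finset (Fin 24)} (hA : A ∈ 𝒞) (hB : B ∈ 𝒞) :
    IsGolayWeight #(A ∆ B) :=
  ⟨_, h𝒞.image_symmDiff hB, A ∆ B, mem_image_of_mem _ hA, rfl⟩

theorem sum_intersectionNumber_mul_choose (Y : Finset (Fin 24)) {j : ℕ} (hj : j ≤ 5) :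
    ∑ k ∈ range 9, intersectionNumber 𝒞 Y k * k.choose j = (#Y).choose j * octadCount j := by
  rw [← sum_choose_card_inter (fun T hT => hT ▸ h𝒞.card_filter_octads_superset (hT ▸ hj)) Y,
    ← sum_fiberwise_of_maps_to (g := fun B => #(B ∩ Y)) (t := range 9) fun B hB => ?_]
  · refine sum_congr rfl fun k _ => ?_
    rw [intersectionNumber, sum_const_nat (m := k.choose j) fun B hB => by
      rw [(mem_filter.mp hB).2]]
  · rw [mem_range, Nat.lt_succ_iff, ← (mem_octads.mp hB).2]
    exact card_le_card inter_subset_left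

theorem isGolayWeight_of_intersectionNumber_ne_zero {Y : Finset (Fin 24)} (hY : Y ∈ 𝒞) {k : ℕ}
    (hk : intersectionNumber 𝒞 Y k ≠ 0) : #Y ≤ k + 16 ∧ IsGolayWeight (8 + #Y - 2 * k) := by
  obtain ⟨B, hB⟩ := card_ne_zero.mp hk
  obtain ⟨hBo, rfl⟩ := mem_filter.mp hB
  obtain ⟨hB, hB8⟩ := mem_octads.mp hBo
  have hsymm := card_symmDiff_add_two_mul_card_inter B Y
  have hunion := card_union_add_card_inter B Y
  have huniv := card_le_univ (B ∪ Y)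
  rw [Fintype.card_fin] at huniv
  refine ⟨by omega, ?_⟩
  convert h𝒞.isGolayWeight_card_symmDiff hB hY using 1
  omega

end IsGolayLike

theorem IsGolayWeight.eq_zero_or_le {w : ℕ} (hw : IsGolayWeight w) : w = 0 ∨ 8 ≤ w := by
  obtain ⟨𝒞, h𝒞, A, hA, rfl⟩ := hw
  rcases eq_or_ne A ∅ with rfl | hA₀
  · exact Or.inl rfl
  · exact Or.inr (h𝒞.le_card hA hA₀)

theorem IsGolayWeight.le {w : ℕ} (hw : IsGolayWeight w) : w ≤ 24 := by
  obtain ⟨𝒞, -, A, -, rfl⟩ := hw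
  simpa using card_le_univ A

-- Each weight is ruled out by the moment equations once the preceding ones are.
def excludedWeights : List ℕ := [9, 10, 11, 13, 14, 15, 17, 18, 19, 21, 23, 22, 20]

/-- Necessary conditions on `k = #(B ∩ Y)` for an octad `B` and a codeword `Y` of weight `w`
when no weight in `ws` occurs: `#(B ∪ Y) ≤ 24`, and `B ∆ Y` has weight `8 + w - 2 * k`. -/
def IsAdmissibleIntersection (ws : List ℕ) (w k : ℕ) : Prop :=
  w ≤ k + 16 ∧ (8 + w - 2 * k = 0 ∨ 8 ≤ 8 + w - 2 * k) ∧ 8 + w - 2 * k ∉ ws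

theorem moment_equations_infeasible : ∀ i (hi : i < excludedWeights.length), ∀ n : ℕ → ℕ,
    (∀ k ∈ range 9, n k ≠ 0 →
      IsAdmissibleIntersection (excludedWeights.take i) excludedWeights[i] k) →
    (∀ j ∈ range 6,
      ∑ k ∈ range 9, n k * k.choose j = excludedWeights[i].choose j * octadCount j) →
    False := by
  intro i hi n hsupp hmoment
  simp only [sum_range_succ, sum_range_zero] at hmoment
  simp only [range_add_one, forall_mem_insert]
    at hsupp hmoment
  simp only [excludedWeights, List.length_cons, List.length_nil] at hi
  interval_cases i <;>
    norm_num [excludedWeights, IsAdmissibleIntersection, octadCount, Nat.choose]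
      at hsupp hmoment <;>
    omega

theorem not_isGolayWeight_getElem_excludedWeights :
    ∀ i (hi : i < excludedWeights.length), ¬ IsGolayWeight excludedWeights[i] := by
  intro i
  induction i using Nat.strong_induction_on with
  | _ i ih =>
  rintro hi ⟨𝒞, h𝒞, Y, hY, hYw⟩
  refine moment_equations_infeasible i hi (intersectionNumber 𝒞 Y) (fun k _ hk => ?_)
    fun j hj => hYw ▸ h𝒞.sum_intersectionNumber_mul_choose Y (Nat.lt_succ_iff.mp (mem_range.mp hj))
  obtain ⟨hle, hw⟩ := h𝒞.isGolayWeight_of_intersectionNumber_ne_zero hY hk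
  rw [hYw] at hle hw
  refine ⟨hle, hw.eq_zero_or_le, fun hmem => ?_⟩
  obtain ⟨i', hi', heq⟩ := List.mem_iff_getElem.mp hmem
  rw [List.getElem_take] at heq
  rw [List.length_take] at hi'
  exact ih i' (by omega) _ (heq ▸ hw)

theorem IsGolayWeight.mem {w : ℕ} (hw : IsGolayWeight w) :
    w ∈ ({0, 8, 12, 16, 24} : Finset ℕ) := by
  have hnot : w ∉ excludedWeights := fun hmem => by
    obtain ⟨i, hi, rfl⟩ := List.mem_iff_getElem.mp hmem
    exact not_isGolayWeight_getElem_excludedWeights i hi hw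
  have := hw.eq_zero_or_le
  have := hw.le
  simp only [excludedWeights, List.mem_cons, List.not_mem_nil, or_false, not_or] at hnot
  simp only [mem_insert, mem_singleton]
  omega

theorem IsGolayLike.even_card_inter {𝒞 : Finset (Finset (Fin 24))} (h𝒞 : IsGolayLike 𝒞)
    {A B : Finset (Fin 24)} (hA : A ∈ 𝒞) (hB : B ∈ 𝒞) : Even #(A ∩ B) := by
  have hwA := IsGolayWeight.mem ⟨𝒞, h𝒞, A, hA, rfl⟩
  have hwB := IsGolayWeight.mem ⟨𝒞, h𝒞, B, hB, rfl⟩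
  have hwAB := (h𝒞.isGolayWeight_card_symmDiff hA hB).mem
  have := card_symmDiff_add_two_mul_card_inter A B
  simp only [mem_insert, mem_singleton] at hwA hwB hwAB
  rw [Nat.even_iff]
  omega

theorem isGolayLike_image_wordSupport {C : Set (Fin 24 → ZMod 2)} (hcard : Nat.card C = 4096)
    (h0 : (0 : Fin 24 → ZMod 2) ∈ C) (hd : ∀ x ∈ C, ∀ y ∈ C, x ≠ y → 8 ≤ hammingDist x y) :
    IsGolayLike ((Set.toFinite C).toFinset.image wordSupport) where
  card_eq := by
    rw [card_image_of_injective _ wordSupport_injective, ← Set.ncard_eq_toFinset_card,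
      ← Nat.card_coe_set_eq, hcard]
  empty_mem := mem_image.mpr ⟨0, (Set.toFinite C).mem_toFinset.mpr h0, wordSupport_zero⟩
  le_card_symmDiff := by
    simp only [mem_image, Set.Finite.mem_toFinset, forall_exists_index, and_imp,
      forall_apply_eq_imp_iff₂]
    intro x hx y hy hxy
    rw [← hammingDist_eq_card_symmDiff]
    exact hd x hx y hy (ne_of_apply_ne _ hxy)

/-- Any binary code with 4096 codewords, length 24, containing 0, with minimum
distance 8, has weights only in {0,8,12,16,24}, is self-orthogonal, linear, and
self-dual. -/
theorem golay_like_code_selfdual (C : Set (Fin 24 → ZMod 2))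
    (hcard : Nat.card C = 4096) (h0 : (0 : Fin 24 → ZMod 2) ∈ C)
    (hd : ∀ x ∈ C, ∀ y ∈ C, x ≠ y → 8 ≤ hammingDist x y) :
    (∀ x ∈ C, hammingNorm x = 0 ∨ hammingNorm x = 8 ∨ hammingNorm x = 12 ∨
      hammingNorm x = 16 ∨ hammingNorm x = 24) ∧
    (∀ x ∈ C, ∀ y ∈ C, ∑ i, x i * y i = 0) ∧
    (∃ D : Submodule (ZMod 2) (Fin 24 → ZMod 2), (D : Set (Fin 24 → ZMod 2)) = C) ∧
    C = {x | ∀ y ∈ C, ∑ i, x i * y i = 0} := by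
  have h𝒞 := isGolayLike_image_wordSupport hcard h0 hd
  have hmem : ∀ x ∈ C, wordSupport x ∈ (Set.toFinite C).toFinset.image wordSupport :=
    fun x hx => mem_image_of_mem _ ((Set.toFinite C).mem_toFinset.mpr hx)
  have horth : ∀ x ∈ C, ∀ y ∈ C, x ⬝ᵥ y = 0 := fun x hx y hy => by
    rw [dotProduct_eq_card_inter, ZMod.natCast_eq_zero_iff_even]
    exact h𝒞.even_card_inter (hmem x hx) (hmem y hy)
  have hdual := eq_orthogonal_span_of_card_sq_eq horth (by rw [hcard]; rfl)
  refine ⟨fun x hx => ?_, horth, ⟨_, hdual.symm⟩, ?_⟩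
  · simpa using IsGolayWeight.mem (⟨_, h𝒞, _, hmem x hx, rfl⟩ : IsGolayWeight (hammingNorm x))
  · conv_lhs => rw [hdual]
    ext x
    exact mem_orthogonal_span_iff
end

section
/- If an incidence matrix of a projective plane of order n with n ≡ 2 (mod 4) generates a binary code C of length n²+n+1, then the extended code C̄ is self-orthogonal; consequently the dimension of C is at most (n² + n + 2)/2. -/
/-!
Counting the flags through a point shows that every point lies on `n + 1` lines; a point of `b`
then has only `n` other lines through it, too few to reach all `n + 1` points of a line `c`
disjoint from `b`, so any two lines meet in exactly one point. Over `𝔽₂` the extended inner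
product is the bilinear form `⟨ū, w̄⟩ = u ⬝ w + (∑ u)(∑ w)`, so it suffices to check it on lines,
where it is `|b ∩ c| + |b| |c| = 1 + 1 = 0` because `n + 1` is odd. A subspace of `𝔽₂ᴺ` that is
self-orthogonal for the nondegenerate dot product has dimension at most `N / 2`, and extension is
injective, so `dim C ≤ (n² + n + 2) / 2`.
-/

open Finset

namespace Finset

variable {α : Type*} [DecidableEq α] {B : Finset (Finset α)}

def UniqueBlockThroughPairs (B : Finset (Finset α)) : Prop :=
  ∀ x y : α, x ≠ y → #{b ∈ B | x ∈ b ∧ y ∈ b} = 1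

theorem UniqueBlockThroughPairs.card_inter_le_one (hB : B.UniqueBlockThroughPairs)
    {b c : Finset α} (hb : b ∈ B) (hc : c ∈ B) (hbc : b ≠ c) : #(b ∩ c) ≤ 1 := by
  refine card_le_one.2 fun y hy z hz => by_contra fun hyz => ?_
  rw [mem_inter] at hy hz
  have hpair : {b, c} ⊆ {d ∈ B | y ∈ d ∧ z ∈ d} := by
    simp [insert_subset_iff, hb, hc, hy, hz]
  have := card_le_card hpair
  rw [card_pair hbc, hB y z hyz] at this
  omega

theorem UniqueBlockThroughPairs.sum_card_inter_filter_mem (hB : B.UniqueBlockThroughPairs)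
    {x : α} {S : Finset α} (hx : x ∉ S) :
    ∑ d ∈ B with x ∈ d, #(S ∩ d) = #S := by
  simpa using sum_card_inter (B := {d ∈ B | x ∈ d}) (n := 1) fun y hy => by
    rw [filter_filter]
    exact hB x y fun h => hx (h ▸ hy)

theorem UniqueBlockThroughPairs.card_filter_mem_mul [Fintype α] (hB : B.UniqueBlockThroughPairs)
    {k : ℕ} (hk : ∀ b ∈ B, #b = k) (x : α) :
    #{d ∈ B | x ∈ d} * (k - 1) = Fintype.card α - 1 := by
  have hsum := hB.sum_card_inter_filter_mem (notMem_erase x univ)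
  rw [card_erase_of_mem (mem_univ x), card_univ] at hsum
  rw [← hsum, ← smul_eq_mul, ← sum_const]
  refine sum_congr rfl fun d hd => ?_
  rw [mem_filter] at hd
  rw [erase_inter, univ_inter, card_erase_of_mem hd.2, hk d hd.1]

theorem UniqueBlockThroughPairs.card_lt_card_filter_mem_of_disjoint
    (hB : B.UniqueBlockThroughPairs)
    {b c : Finset α} (hb : b ∈ B) (hc : c ∈ B) (hbc : Disjoint b c) {x : α} (hxb : x ∈ b) :
    #c < #{d ∈ B | x ∈ d} := by
  have hxc : x ∉ c := hbc.notMem_of_mem_left_finset hxb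
  have hbx : b ∈ {d ∈ B | x ∈ d} := mem_filter.2 ⟨hb, hxb⟩
  have hle : ∀ d ∈ {d ∈ B | x ∈ d}.erase b, #(c ∩ d) ≤ 1 := fun d hd => by
    rw [mem_erase, mem_filter] at hd
    exact hB.card_inter_le_one hc hd.2.1 fun h => hxc (h ▸ hd.2.2)
  calc #c = ∑ d ∈ B with x ∈ d, #(c ∩ d) :=
        (hB.sum_card_inter_filter_mem hxc).symm
    _ = #(c ∩ b) + ∑ d ∈ {d ∈ B | x ∈ d}.erase b, #(c ∩ d) := (add_sum_erase _ _ hbx).symm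
    _ ≤ 0 + #({d ∈ B | x ∈ d}.erase b) * 1 := by
        gcongr
        · rw [disjoint_iff_inter_eq_empty.1 hbc.symm, card_empty]
        · exact sum_le_card_nsmul _ _ _ hle
    _ < #{d ∈ B | x ∈ d} := by
        rw [card_erase_of_mem hbx]
        have := card_pos.2 ⟨b, hbx⟩
        omega

variable [Fintype α] {n : ℕ}

theorem UniqueBlockThroughPairs.card_filter_mem_eq (hB : B.UniqueBlockThroughPairs) (hn : 0 < n)
    (hα : Fintype.card α = n ^ 2 + n + 1) (hk : ∀ b ∈ B, #b = n + 1) (x : α) :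
    #{d ∈ B | x ∈ d} = n + 1 := by
  have := hB.card_filter_mem_mul hk x
  rw [hα, add_tsub_cancel_right, add_tsub_cancel_right] at this
  exact Nat.eq_of_mul_eq_mul_right hn (by rw [this]; ring)

theorem UniqueBlockThroughPairs.card_inter_eq_one (hB : B.UniqueBlockThroughPairs) (hn : 0 < n)
    (hα : Fintype.card α = n ^ 2 + n + 1) (hk : ∀ b ∈ B, #b = n + 1) {b c : Finset α}
    (hb : b ∈ B) (hc : c ∈ B) (hbc : b ≠ c) :
    #(b ∩ c) = 1 := by
  refine (hB.card_inter_le_one hb hc hbc).antisymm (card_pos.2 ?_)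
  by_contra hdisj
  rw [not_nonempty_iff_eq_empty, ← disjoint_iff_inter_eq_empty] at hdisj
  obtain ⟨x, hx⟩ : b.Nonempty := card_pos.1 (by rw [hk b hb]; omega)
  have := hB.card_lt_card_filter_mem_of_disjoint hb hc hdisj hx
  rw [hk c hc, hB.card_filter_mem_eq hn hα hk x] at this
  exact this.false

end Finset

section ParityExtension

variable (R : Type*) [CommSemiring R] (m : ℕ)

def parityExtend : (Fin m → R) →ₗ[R] (Fin (m + 1) → R) where
  toFun u := Fin.snoc u (∑ j, u j)
  map_add' u v := by
    funext i
    refine Fin.lastCases ?_ (fun j => ?_) i <;> simp [sum_add_distrib]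
  map_smul' a u := by
    funext i
    refine Fin.lastCases ?_ (fun j => ?_) i <;> simp [mul_sum]

variable {R m}

@[simp]
theorem parityExtend_apply (u : Fin m → R) : parityExtend R m u = Fin.snoc u (∑ j, u j) := rfl

theorem parityExtend_injective : Function.Injective (parityExtend R m) := fun u v h =>
  funext fun i => by simpa using congrFun h i.castSucc

theorem parityExtend_dotProduct (u w : Fin m → R) :
    parityExtend R m u ⬝ᵥ parityExtend R m w = u ⬝ᵥ w + (∑ j, u j) * ∑ j, w j := by
  simp [dotProduct, Fin.sum_univ_castSucc]

end ParityExtension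

theorem dotProduct_ite_mem {α R : Type*} [Fintype α] [DecidableEq α] [Semiring R]
    (s t : Finset α) :
    (fun p => if p ∈ s then (1 : R) else 0) ⬝ᵥ (fun p => if p ∈ t then 1 else 0) = #(s ∩ t) := by
  simp only [dotProduct, mul_ite, mul_one, mul_zero, ← ite_and, ← mem_inter, sum_boole]
  rw [filter_mem_eq_inter, univ_inter, inter_comm]

theorem LinearMap.eq_zero_of_mem_span {R M N : Type*} [CommSemiring R] [AddCommMonoid M]
    [AddCommMonoid N] [Module R M] [Module R N] (f : M →ₗ[R] M →ₗ[R] N) {s : Set M}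
    (h : ∀ x ∈ s, ∀ y ∈ s, f x y = 0) {x y : M} (hx : x ∈ Submodule.span R s)
    (hy : y ∈ Submodule.span R s) : f x y = 0 := by
  have hflip : Submodule.span R s ≤ LinearMap.ker (f.flip y) := by
    refine Submodule.span_le.2 fun x' hx' => ?_
    have hker : Submodule.span R s ≤ LinearMap.ker (f x') :=
      Submodule.span_le.2 fun y' hy' => h x' hx' y' hy'
    exact hker hy
  exact hflip hx

theorem Submodule.two_mul_finrank_le_of_dotProduct_eq_zero {K ι : Type*} [Field K] [Fintype ι]
    [DecidableEq ι] (D : Submodule K (ι → K)) (hD : ∀ u ∈ D, ∀ w ∈ D, u ⬝ᵥ w = 0) :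
    2 * Module.finrank K D ≤ Fintype.card ι := by
  have hmap : D.map (dotProductEquiv K ι).toLinearMap ≤ D.dualAnnihilator := by
    rintro _ ⟨u, hu, rfl⟩
    exact (mem_dualAnnihilator _).2 fun w hw => hD u hu w hw
  have hle := Submodule.finrank_mono hmap
  rw [LinearEquiv.finrank_map_eq] at hle
  have := Subspace.finrank_add_finrank_dualAnnihilator_eq D
  rw [Module.finrank_fintype_fun_eq_card] at this
  omega

theorem parityExtend_ite_mem_dotProduct_eq_zero {m : ℕ} {s t : Finset (Fin m)} (hs : Odd #s)
    (ht : Odd #t) (hst : Odd #(s ∩ t)) :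
    parityExtend (ZMod 2) m (fun p => if p ∈ s then 1 else 0) ⬝ᵥ
      parityExtend (ZMod 2) m (fun p => if p ∈ t then 1 else 0) = 0 := by
  simp only [parityExtend_dotProduct, dotProduct_ite_mem, sum_boole, filter_mem_eq_inter,
    univ_inter, hs.natCast_zmod_two, ht.natCast_zmod_two, hst.natCast_zmod_two]
  decide

/-- For a projective plane of order n ≡ 2 (mod 4), the extension of the binary
code generated by the rows of an incidence matrix is self-orthogonal, and the
code has dimension at most (n²+n+2)/2. -/
theorem projective_plane_code {n : ℕ} (hn : n % 4 = 2)
    (B : Finset (Finset (Fin (n ^ 2 + n + 1))))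
    (hk : ∀ b ∈ B, b.card = n + 1)
    (h2 : ∀ x y : Fin (n ^ 2 + n + 1), x ≠ y →
      (B.filter fun b => x ∈ b ∧ y ∈ b).card = 1) :
    let C := Submodule.span (ZMod 2)
      {x : Fin (n ^ 2 + n + 1) → ZMod 2 | ∃ b ∈ B, x = fun p => if p ∈ b then 1 else 0}
    (∀ u ∈ C, ∀ w ∈ C,
        ∑ i, Fin.snoc u (∑ j, u j) i * Fin.snoc w (∑ j, w j) i = (0 : ZMod 2)) ∧
      Module.finrank (ZMod 2) C ≤ (n ^ 2 + n + 2) / 2 := by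
  intro C
  have hplane : B.UniqueBlockThroughPairs := h2
  have hodd : ∀ b ∈ B, Odd #b := fun b hb => by rw [hk b hb]; exact Nat.odd_iff.2 (by omega)
  have hself : ∀ u ∈ C, ∀ w ∈ C, parityExtend (ZMod 2) _ u ⬝ᵥ parityExtend (ZMod 2) _ w = 0 := by
    refine fun u hu w hw => ((dotProductBilin (ZMod 2) (ZMod 2)).compl₁₂ (parityExtend _ _)
      (parityExtend _ _)).eq_zero_of_mem_span ?_ hu hw
    rintro _ ⟨b, hb, rfl⟩ _ ⟨c, hc, rfl⟩
    refine parityExtend_ite_mem_dotProduct_eq_zero (hodd b hb) (hodd c hc) ?_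
    rcases eq_or_ne b c with rfl | hbc
    · rw [inter_self]; exact hodd b hb
    · rw [hplane.card_inter_eq_one (by omega) (Fintype.card_fin _) hk hb hc hbc]
      exact odd_one
  refine ⟨hself, ?_⟩
  have hrank := (C.map (parityExtend (ZMod 2) _)).two_mul_finrank_le_of_dotProduct_eq_zero <| by
    rintro _ ⟨u, hu, rfl⟩ _ ⟨w, hw, rfl⟩
    exact hself u hu w hw
  rw [← LinearEquiv.finrank_eq (Submodule.equivMapOfInjective _ parityExtend_injective C),
    Fintype.card_fin] at hrank
  omega
end
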